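/- Let ⊘ be a uniform left Kronecker quotient over a field F realized by the matrices Q(A), and let {A_1, …, A_{mn}} be a basis of the vector space M(F,m,n) (each A_j is necessarily nonzero). Then the following are equivalent: (1) for all s,t ∈ ℕ and all M ∈ M(F,ms,nt), M = Σ_{j=1}^{mn} A_j ⊗ (A_j ⊘ M); (2) Q(A_j) ∘ A_k = δ_{j,k} for all j,k ∈ {1,…,mn}. -/

import Mathlib

/-!
Under `Q(b j) ∘ b k = δ_{j,k}` the functionals `A ↦ Q(b j) ∘ A` are the coordinate functionals
of the basis, so `∑ j, Q(b j)_{a,c} • b j` is the matrix unit `E_{a,c}`; reading the expansion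
entrywise, `∑ j, b j ⊗ (Q(b j) ∘ M)` then collapses to `M`. Conversely, the expansion of
`b k ⊗ 1` (with `s = t = 1`) reads `b k = ∑ j, (Q(b j) ∘ b k) • b j`, and linear independence
of the basis forces `Q(b j) ∘ b k = δ_{j,k}`.
-/

open Matrix
open scoped Kronecker

/-- The partial Frobenius product `A ∘ M`:
`(A ∘ M)_{u,v} = ∑_{j,k} A_{j,k} M_{(j,u),(k,v)}`. -/
def pfrob {F : Type*} [Field F] {I J S T : Type*} [Fintype I] [Fintype J]
    (A : Matrix I J F) (M : Matrix (I × S) (J × T) F) : Matrix S T F :=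
  Matrix.of fun u v => ∑ j, ∑ k, A j k * M (j, u) (k, v)

/-- The scalar (`s = t = 1`) partial Frobenius product. -/
def pfrobS {F : Type*} [Field F] {I J : Type*} [Fintype I] [Fintype J]
    (A M : Matrix I J F) : F := ∑ j, ∑ k, A j k * M j k

section PartialFrobenius

variable {F : Type*} [Field F] {I J S T ι : Type*} [Fintype I] [Fintype J]

def pfrobSₗ (A : Matrix I J F) : Matrix I J F →ₗ[F] F where
  toFun := pfrobS A
  map_add' M N := by simp only [pfrobS, Matrix.add_apply, mul_add, Finset.sum_add_distrib]
  map_smul' c M := by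
    simp only [pfrobS, Matrix.smul_apply, smul_eq_mul, Finset.mul_sum, RingHom.id_apply,
      mul_left_comm]

@[simp]
lemma pfrobSₗ_apply (A M : Matrix I J F) : pfrobSₗ A M = pfrobS A M := rfl

lemma pfrobS_single [DecidableEq I] [DecidableEq J] (A : Matrix I J F) (a : I) (c : J) :
    pfrobS A (single a c 1) = A a c := by
  simp [pfrobS, single_apply, ite_and]

lemma pfrob_kronecker (A C : Matrix I J F) (B : Matrix S T F) :
    pfrob A (C ⊗ₖ B) = pfrobS A C • B := by
  ext u v
  simp [pfrob, pfrobS, kroneckerMap_apply, Finset.sum_mul, mul_assoc]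

lemma sum_kronecker_pfrob_kronecker [Fintype ι] (b P : ι → Matrix I J F) (C : Matrix I J F)
    (B : Matrix S T F) :
    ∑ j, b j ⊗ₖ pfrob (P j) (C ⊗ₖ B) = (∑ j, pfrobS (P j) C • b j) ⊗ₖ B := by
  simp only [pfrob_kronecker, kronecker_smul, ← smul_kronecker]
  exact (map_sum ((kroneckerBilinear (R := F)).flip B) _ _).symm

variable (b : Module.Basis ι F (Matrix I J F)) (P : ι → Matrix I J F)

def Biorthogonal [DecidableEq ι] : Prop :=
  ∀ j k, pfrobS (P j) (b k) = if j = k then 1 else 0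

lemma pfrobS_eq_repr_of_biorthogonal [DecidableEq ι]
    (h : Biorthogonal b P) (j : ι) (C : Matrix I J F) :
    pfrobS (P j) C = b.repr C j := by
  have hcoord : pfrobSₗ (P j) = b.coord j :=
    b.ext fun k => by simp [h j k, Finsupp.single_apply, eq_comm]
  exact LinearMap.congr_fun hcoord C

lemma sum_smul_basis_eq_single_of_biorthogonal [Fintype ι] [DecidableEq ι] [DecidableEq I]
    [DecidableEq J] (h : Biorthogonal b P) (a : I) (c : J) :
    ∑ j, P j a c • b j = single a c 1 := by
  simpa only [← pfrobS_single (P _), pfrobS_eq_repr_of_biorthogonal b P h] using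
    b.sum_repr (single a c 1)

lemma eq_sum_kronecker_pfrob_of_biorthogonal [Fintype ι] [DecidableEq ι]
    (h : Biorthogonal b P) (M : Matrix (I × S) (J × T) F) :
    M = ∑ j, b j ⊗ₖ pfrob (P j) M := by
  classical
  ext ⟨p, u⟩ ⟨r, v⟩
  calc M (p, u) (r, v) = ∑ a, ∑ c, single a c (1 : F) p r * M (a, u) (c, v) := by
        simp [single_apply, ite_and]
    _ = ∑ a, ∑ c, (∑ j, P j a c • b j) p r * M (a, u) (c, v) := by
        simp only [sum_smul_basis_eq_single_of_biorthogonal b P h]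
    _ = (∑ j, b j ⊗ₖ pfrob (P j) M) (p, u) (r, v) := by
        simp only [Matrix.sum_apply, Matrix.smul_apply, smul_eq_mul, kroneckerMap_apply, pfrob,
          of_apply, Finset.sum_mul, Finset.mul_sum, mul_assoc, mul_left_comm (b _ p r)]
        exact (Finset.sum_congr rfl fun _ _ => Finset.sum_comm).trans Finset.sum_comm

lemma biorthogonal_of_eq_sum_kronecker_pfrob [Fintype ι] [DecidableEq ι]
    (h : ∀ M : Matrix (I × Fin 1) (J × Fin 1) F, M = ∑ j, b j ⊗ₖ pfrob (P j) M) :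
    Biorthogonal b P := by
  intro j k
  have hk : b k = ∑ i, pfrobS (P i) (b k) • b i := by
    ext p r
    simpa using congr_fun₂ ((h (b k ⊗ₖ 1)).trans (sum_kronecker_pfrob_kronecker b P _ _))
      (p, 0) (r, 0)
  have hrepr := congr_arg (b.repr · j) hk
  simp only [b.repr_sum_self, b.repr_self, Finsupp.single_apply] at hrepr
  rw [← hrepr]
  exact if_congr eq_comm rfl rfl

theorem eq_sum_kronecker_pfrob_iff_biorthogonal [Fintype ι] [DecidableEq ι] :
    (∀ (s t : ℕ) (M : Matrix (I × Fin s) (J × Fin t) F),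
      M = ∑ j, b j ⊗ₖ pfrob (P j) M) ↔
      Biorthogonal b P :=
  ⟨fun h => biorthogonal_of_eq_sum_kronecker_pfrob b P (h 1 1),
    fun h _ _ => eq_sum_kronecker_pfrob_of_biorthogonal b P h⟩

end PartialFrobenius

theorem uniform_kronecker_quotient_basis_expansion_iff_general
    {F : Type*} [Field F]
    (q : ∀ (m n s t : ℕ), Matrix (Fin m) (Fin n) F →
      Matrix (Fin m × Fin s) (Fin n × Fin t) F → Matrix (Fin s) (Fin t) F)
    (Q : ∀ (m n : ℕ), Matrix (Fin m) (Fin n) F → Matrix (Fin m) (Fin n) F)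
    (hunif : ∀ (m n s t : ℕ) (A : Matrix (Fin m) (Fin n) F), A ≠ 0 →
      ∀ M : Matrix (Fin m × Fin s) (Fin n × Fin t) F,
        q m n s t A M = pfrob (Q m n A) M)
    (m n : ℕ) (b : Module.Basis (Fin (m * n)) F (Matrix (Fin m) (Fin n) F)) :
    (∀ (s t : ℕ) (M : Matrix (Fin m × Fin s) (Fin n × Fin t) F),
      M = ∑ j : Fin (m * n), (b j) ⊗ₖ (q m n s t (b j) M)) ↔
    (∀ j k : Fin (m * n),
      pfrobS (Q m n (b j)) (b k) = if j = k then (1 : F) else 0) := by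
  have hq : ∀ s t M j, q m n s t (b j) M = pfrob (Q m n (b j)) M :=
    fun s t M j => hunif m n s t (b j) (b.ne_zero j) M
  simp only [hq]
  exact eq_sum_kronecker_pfrob_iff_biorthogonal b fun j => Q m n (b j)

theorem uniform_kronecker_quotient_basis_expansion_iff
    {F : Type*} [Field F]
    (q : ∀ (m n s t : ℕ), Matrix (Fin m) (Fin n) F →
      Matrix (Fin m × Fin s) (Fin n × Fin t) F → Matrix (Fin s) (Fin t) F)
    (Q : ∀ (m n : ℕ), Matrix (Fin m) (Fin n) F → Matrix (Fin m) (Fin n) F)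
    (hquot : ∀ (m n s t : ℕ) (A : Matrix (Fin m) (Fin n) F), A ≠ 0 →
      ∀ B : Matrix (Fin s) (Fin t) F, q m n s t A (A ⊗ₖ B) = B)
    (hQnz : ∀ (m n : ℕ) (A : Matrix (Fin m) (Fin n) F), A ≠ 0 → Q m n A ≠ 0)
    (hQone : ∀ (m n : ℕ) (A : Matrix (Fin m) (Fin n) F), A ≠ 0 →
      pfrobS (Q m n A) A = 1)
    (hunif : ∀ (m n s t : ℕ) (A : Matrix (Fin m) (Fin n) F), A ≠ 0 →
      ∀ M : Matrix (Fin m × Fin s) (Fin n × Fin t) F,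
        q m n s t A M = pfrob (Q m n A) M)
    (m n : ℕ) (b : Module.Basis (Fin (m * n)) F (Matrix (Fin m) (Fin n) F)) :
    (∀ (s t : ℕ) (M : Matrix (Fin m × Fin s) (Fin n × Fin t) F),
      M = ∑ j : Fin (m * n), (b j) ⊗ₖ (q m n s t (b j) M)) ↔
    (∀ j k : Fin (m * n),
      pfrobS (Q m n (b j)) (b k) = if j = k then (1 : F) else 0) :=
  uniform_kronecker_quotient_basis_expansion_iff_general q Q hunif m n b
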